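/- arXiv:1807.10963 — 5 statements merged into one kernel-verified Lean document; each statement's English description precedes it below -/
import Mathlib

section
/- Let E be a compact Hausdorff space such that the group of invertible elements of the Banach algebra C(E, ℂ) (continuous complex-valued functions with sup norm) is dense in C(E, ℂ). Then the Lebesgue covering dimension of E is at most 1. -/
/-- Lebesgue covering dimension of `X` is at most `n`: every open cover has an
open shrinking/refinement of order at most `n + 1`. -/
def CoveringDimLE (X : Type*) [TopologicalSpace X] (n : ℕ) : Prop :=
  ∀ (ι : Type) (U : ι → Set X), (∀ i, IsOpen (U i)) → (⋃ i, U i) = Set.univ →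
    ∃ V : ι → Set X, (∀ i, IsOpen (V i)) ∧ (⋃ i, V i) = Set.univ ∧
      (∀ i, V i ⊆ U i) ∧ ∀ x : X, {i | x ∈ V i}.Finite ∧ {i | x ∈ V i}.ncard ≤ n + 1

/-!
A partition of unity subordinate to an open cover `W₀, W₁, W₂` of `E` maps `E` into a triangle,
sending the zero set of the `k`-th function onto the edge opposite to the `k`-th vertex.
Perturbing this map to a nowhere-vanishing one and pulling back three open sectors around the
vertex directions gives a shrinking of the cover with empty triple intersection.
For a finite cover, colouring the indices with three colours so that a given triple gets
distinct colours reduces that triple to the case of three sets; treating the finitely many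
triples one after another bounds the order of the shrinking by 2, and compactness reduces an
arbitrary open cover to a finite one.
-/

open Set Finset
open scoped InnerProductSpace

noncomputable def triangleVertex : Fin 3 → ℂ := ![1, ⟨-1/2, √3/2⟩, ⟨-1/2, -(√3/2)⟩]

namespace triangleVertex

lemma inner_eq (k i : Fin 3) :
    ⟪triangleVertex k, triangleVertex i⟫_ℝ = if k = i then 1 else -1/2 := by
  have h3 : √3 * √3 = 3 := Real.mul_self_sqrt (by norm_num)
  rw [Complex.inner]
  fin_cases k <;> fin_cases i <;> simp [triangleVertex] <;> linarith

lemma norm_eq (k : Fin 3) : ‖triangleVertex k‖ = 1 :=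
  (pow_left_inj₀ (norm_nonneg _) zero_le_one two_ne_zero).1 <| by
    rw [one_pow, ← real_inner_self_eq_norm_sq, inner_eq, if_pos rfl]

lemma sum_eq_zero : ∑ k, triangleVertex k = 0 := by
  simp [triangleVertex, Fin.sum_univ_three, Complex.ext_iff]
  norm_num

lemma sum_inner_eq_zero (z : ℂ) : ∑ k, ⟪triangleVertex k, z⟫_ℝ = 0 := by
  rw [← _root_.sum_inner, sum_eq_zero, inner_zero_left]

lemma sum_inner_sq (z : ℂ) : ∑ k, ⟪triangleVertex k, z⟫_ℝ ^ 2 = 3 / 2 * ‖z‖ ^ 2 := by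
  have h3 : √3 ^ 2 = 3 := Real.sq_sqrt (by norm_num)
  rw [← Complex.normSq_eq_norm_sq, Complex.normSq_apply]
  simp [triangleVertex, Fin.sum_univ_three, Complex.inner]
  linear_combination (z.im ^ 2 / 2) * h3

lemma inner_sum_smul {t : Fin 3 → ℝ} (ht : ∑ i, t i = 1) (k : Fin 3) :
    ⟪triangleVertex k, ∑ i, t i • triangleVertex i⟫_ℝ = (3 * t k - 1) / 2 := by
  rw [Fin.sum_univ_three] at ht
  simp only [_root_.inner_sum, real_inner_smul_right, inner_eq]
  rw [Fin.sum_univ_three]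
  fin_cases k <;> simp <;> linarith

lemma norm_sum_smul_le {t : Fin 3 → ℝ} (ht0 : ∀ i, 0 ≤ t i) (ht : ∑ i, t i = 1) :
    ‖∑ i, t i • triangleVertex i‖ ≤ 1 :=
  calc ‖∑ i, t i • triangleVertex i‖ ≤ ∑ i, ‖t i • triangleVertex i‖ := norm_sum_le _ _
    _ = 1 := by simp [norm_eq, abs_of_nonneg (ht0 _), ht]

end triangleVertex

/-- The open sector of half-angle `arccos (-1/4)` around `triangleVertex k`. Since
`π/3 < arccos (-1/4) < 2π/3`, the three sectors cover `ℂ \ {0}` without a common point, and each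
one misses the `1/8`-neighbourhood of the edge of the triangle opposite to its vertex. -/
def triangleSector (k : Fin 3) : Set ℂ := {z | -‖z‖ < 4 * ⟪triangleVertex k, z⟫_ℝ}

lemma isOpen_triangleSector (k : Fin 3) : IsOpen (triangleSector k) :=
  isOpen_lt continuous_norm.neg (continuous_const.mul (continuous_const.inner continuous_id))

lemma exists_mem_triangleSector {z : ℂ} (hz : z ≠ 0) : ∃ k, z ∈ triangleSector k := by
  by_contra! h
  have h0 := h 0
  have h1 := h 1
  have h2 := h 2
  simp only [triangleSector, mem_ofPred_eq, not_lt] at h0 h1 h2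
  have hsum := triangleVertex.sum_inner_eq_zero z
  rw [Fin.sum_univ_three] at hsum
  linarith [norm_pos_iff.2 hz]

lemma not_forall_mem_triangleSector (z : ℂ) : ¬ ∀ k, z ∈ triangleSector k := by
  intro h
  have hsum := triangleVertex.sum_inner_eq_zero z
  have hsq := triangleVertex.sum_inner_sq z
  simp only [triangleSector, mem_ofPred_eq] at h
  rw [Fin.sum_univ_three] at hsum hsq
  have h0 := h 0
  have h1 := h 1
  have h2 := h 2
  set a := fun k => ⟪triangleVertex k, z⟫_ℝ
  set r := ‖z‖
  -- each `a k` lies in `(-r/4, r/2)`, but `∑ k, (r/2 - a k) * (4 * a k + r) = -9r²/2`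
  nlinarith [mul_pos (by linarith : 0 < r / 2 - a 0) (by linarith : 0 < 4 * a 0 + r),
    mul_pos (by linarith : 0 < r / 2 - a 1) (by linarith : 0 < 4 * a 1 + r),
    mul_pos (by linarith : 0 < r / 2 - a 2) (by linarith : 0 < 4 * a 2 + r)]

lemma notMem_triangleSector_of_dist_lt {k : Fin 3} {z w : ℂ} (hz : ‖z‖ ≤ 1)
    (hzk : ⟪triangleVertex k, z⟫_ℝ = -1/2) (hwz : dist w z < 1/8) :
    w ∉ triangleSector k := by
  rw [dist_eq_norm] at hwz
  have hinner : ⟪triangleVertex k, w⟫_ℝ ≤ -1/2 + ‖w - z‖ :=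
    calc ⟪triangleVertex k, w⟫_ℝ = ⟪triangleVertex k, z⟫_ℝ + ⟪triangleVertex k, w - z⟫_ℝ := by
          rw [← inner_add_right, add_sub_cancel]
      _ ≤ -1/2 + ‖w - z‖ := by
          rw [hzk]
          simpa [triangleVertex.norm_eq] using real_inner_le_norm (triangleVertex k) (w - z)
  have hw := norm_le_norm_add_norm_sub' w z
  simp only [triangleSector, mem_ofPred_eq, not_lt]
  linarith

structure IsOpenShrinking {X ι : Type*} [TopologicalSpace X] (V U : ι → Set X) : Prop where
  isOpen : ∀ i, IsOpen (V i)
  iUnion_eq : ⋃ i, V i = univ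
  subset : ∀ i, V i ⊆ U i

lemma IsOpenShrinking.trans {X ι : Type*} [TopologicalSpace X] {W V U : ι → Set X}
    (hWV : IsOpenShrinking W V) (hVU : IsOpenShrinking V U) : IsOpenShrinking W U :=
  ⟨hWV.isOpen, hWV.iUnion_eq, fun i => (hWV.subset i).trans (hVU.subset i)⟩

section DenseInvertibles

variable {E : Type*} [TopologicalSpace E] [CompactSpace E] [T2Space E]
  (hd : Dense {f : C(E, ℂ) | ∀ x, f x ≠ 0})
include hd

theorem exists_isOpenShrinking_iInter_eq_empty_of_fin_three {W : Fin 3 → Set E}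
    (hWo : ∀ k, IsOpen (W k)) (hWc : ⋃ k, W k = univ) :
    ∃ G, IsOpenShrinking G W ∧ ⋂ k, G k = ∅ := by
  obtain ⟨p, hp⟩ := PartitionOfUnity.exists_isSubordinate isClosed_univ W hWo hWc.ge
  have hp1 (x : E) : ∑ k, p k x = 1 := by
    simpa [finsum_eq_sum_of_fintype] using p.sum_eq_one (mem_univ x)
  let F : C(E, ℂ) := ⟨fun x => ∑ k, p k x • triangleVertex k, by fun_prop⟩
  obtain ⟨g, hg0, hgF⟩ := hd.exists_dist_lt F (by norm_num : (0 : ℝ) < 1/8)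
  have hdist (x : E) : dist (g x) (F x) < 1/8 :=
    (ContinuousMap.dist_apply_le_dist x).trans_lt (dist_comm F g ▸ hgF)
  refine ⟨fun k => g ⁻¹' triangleSector k,
    ⟨fun k => (isOpen_triangleSector k).preimage g.continuous, ?_, ?_⟩,
    iInter_eq_empty_iff.2 fun x => not_forall.1 (not_forall_mem_triangleSector (g x))⟩
  · exact eq_univ_of_forall fun x => mem_iUnion.2 (exists_mem_triangleSector (hg0 x))
  · intro k x hx
    refine hp k (subset_tsupport _ fun hpk => ?_)
    refine notMem_triangleSector_of_dist_lt
      (triangleVertex.norm_sum_smul_le (p.nonneg · x) (hp1 x)) ?_ (hdist x) hx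
    rw [triangleVertex.inner_sum_smul (hp1 x), hpk]
    norm_num

theorem exists_isOpenShrinking_biInter_eq_empty {ι : Type*} {V : ι → Set E}
    (hVo : ∀ i, IsOpen (V i)) (hVc : ⋃ i, V i = univ) {A : Finset ι} (hA : #A = 3) :
    ∃ V', IsOpenShrinking V' V ∧ ⋂ i ∈ A, V' i = ∅ := by
  classical
  let e : A ≃ Fin 3 := Fintype.equivFinOfCardEq (by simpa using hA)
  let c : ι → Fin 3 := fun i => if h : i ∈ A then e ⟨i, h⟩ else 0
  have hce (m : Fin 3) : c (e.symm m) = m := by simp [c]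
  obtain ⟨G, hG, hGe⟩ := exists_isOpenShrinking_iInter_eq_empty_of_fin_three hd
    (W := fun m => ⋃ (i) (_ : c i = m), V i) (fun m => isOpen_biUnion fun i _ => hVo i)
    (eq_univ_of_forall fun x => by
      obtain ⟨i, hi⟩ := mem_iUnion.1 (hVc.ge (mem_univ x))
      exact mem_iUnion.2 ⟨c i, mem_biUnion rfl hi⟩)
  refine ⟨fun i => V i ∩ G (c i),
    ⟨fun i => (hVo i).inter (hG.isOpen _), ?_, fun _ => inter_subset_left⟩, ?_⟩
  · refine eq_univ_of_forall fun x => ?_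
    obtain ⟨m, hxm⟩ := mem_iUnion.1 (hG.iUnion_eq.ge (mem_univ x))
    obtain ⟨i, rfl, hi⟩ := mem_iUnion₂.1 (hG.subset m hxm)
    exact mem_iUnion.2 ⟨i, hi, hxm⟩
  · refine subset_empty_iff.1 (hGe ▸ fun x hx => mem_iInter.2 fun m => ?_)
    simpa [hce] using (mem_iInter₂.1 hx (e.symm m) (e.symm m).2).2

theorem exists_isOpenShrinking_forall_biInter_eq_empty {ι : Type*} {V : ι → Set E}
    (hVo : ∀ i, IsOpen (V i)) (hVc : ⋃ i, V i = univ) (𝒜 : Finset (Finset ι))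
    (h𝒜 : ∀ A ∈ 𝒜, #A = 3) :
    ∃ V', IsOpenShrinking V' V ∧ ∀ A ∈ 𝒜, ⋂ i ∈ A, V' i = ∅ := by
  classical
  induction 𝒜 using Finset.induction_on with
  | empty => exact ⟨V, ⟨hVo, hVc, fun _ => subset_rfl⟩, by simp⟩
  | insert A 𝒜 _ ih =>
    obtain ⟨V₁, hV₁, h₁⟩ := ih fun B hB => h𝒜 B (mem_insert_of_mem hB)
    obtain ⟨V₂, hV₂, h₂⟩ := exists_isOpenShrinking_biInter_eq_empty hd hV₁.isOpen hV₁.iUnion_eq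
      (h𝒜 A (mem_insert_self A 𝒜))
    refine ⟨V₂, hV₂.trans hV₁, fun B hB => ?_⟩
    rcases Finset.mem_insert.1 hB with rfl | hB
    · exact h₂
    · exact subset_empty_iff.1 <| (h₁ B hB) ▸ biInter_mono subset_rfl fun i _ => hV₂.subset i

end DenseInvertibles

theorem exists_finset_isOpenShrinking_eq_empty_of_notMem {X ι : Type*} [TopologicalSpace X]
    [CompactSpace X] {U : ι → Set X} (hUo : ∀ i, IsOpen (U i)) (hUc : ⋃ i, U i = univ) :
    ∃ (t : Finset ι) (V : ι → Set X), IsOpenShrinking V U ∧ ∀ i ∉ t, V i = ∅ := by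
  classical
  obtain ⟨t, ht⟩ := isCompact_univ.elim_finite_subcover U hUo hUc.ge
  refine ⟨t, fun i => if i ∈ t then U i else ∅, ⟨fun i => ?_, ?_, fun i => ?_⟩,
    fun i hi => if_neg hi⟩
  · split_ifs
    exacts [hUo i, isOpen_empty]
  · refine eq_univ_of_forall fun x => ?_
    obtain ⟨i, hi, hx⟩ := mem_iUnion₂.1 (ht (mem_univ x))
    exact mem_iUnion.2 ⟨i, by rwa [if_pos hi]⟩
  · split_ifs
    exacts [subset_rfl, empty_subset _]

lemma ncard_le_two_of_forall_biInter_eq_empty {X ι : Type*} {V : ι → Set X} {t : Finset ι}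
    (h : ∀ A ∈ t.powersetCard 3, ⋂ i ∈ A, V i = ∅) {x : X} (hx : {i | x ∈ V i} ⊆ t) :
    {i | x ∈ V i}.ncard ≤ 2 := by
  classical
  by_contra! h3
  obtain ⟨a, b, c, ha, hb, hc, hab, hac, hbc⟩ :=
    (Set.two_lt_ncard_iff (t.finite_toSet.subset hx)).1 h3
  have hA : {a, b, c} ∈ t.powersetCard 3 := mem_powersetCard.2
    ⟨by simpa [Finset.insert_subset_iff] using ⟨hx ha, hx hb, hx hc⟩,
      card_eq_three.2 ⟨a, b, c, hab, hac, hbc, rfl⟩⟩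
  refine eq_empty_iff_forall_notMem.1 (h _ hA) x (mem_iInter₂.2 ?_)
  simp only [Finset.mem_insert, Finset.mem_singleton]
  rintro i (rfl | rfl | rfl)
  exacts [ha, hb, hc]

/-- If the invertible (= nowhere-vanishing) elements of `C(E, ℂ)` are dense, then the
compact Hausdorff space `E` has covering dimension at most 1. -/
theorem stmt_2 (E : Type*) [TopologicalSpace E] [CompactSpace E] [T2Space E]
    (hd : Dense {f : C(E, ℂ) | ∀ x, f x ≠ 0}) : CoveringDimLE E 1 := by
  intro ι U hUo hUc
  obtain ⟨t, U', hU', hU't⟩ := exists_finset_isOpenShrinking_eq_empty_of_notMem hUo hUc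
  obtain ⟨V, hV, hVe⟩ := exists_isOpenShrinking_forall_biInter_eq_empty hd hU'.isOpen
    hU'.iUnion_eq (t.powersetCard 3) fun A hA => (mem_powersetCard.1 hA).2
  have hVt (x : E) : {i | x ∈ V i} ⊆ t := fun i hi =>
    by_contra fun hit => (hU't i hit ▸ hV.subset i) hi
  exact ⟨V, hV.isOpen, hV.iUnion_eq, (hV.trans hU').subset, fun x =>
    ⟨t.finite_toSet.subset (hVt x), ncard_le_two_of_forall_biInter_eq_empty hVe (hVt x)⟩⟩
end

section
/- Let E be a compact Hausdorff space of Lebesgue covering dimension ≥ 2. Then there exists a continuous function f : E → ℂ that cannot be uniformly approximated by nowhere-vanishing continuous functions; i.e., the nowhere-vanishing functions are not dense in C(E, ℂ). -/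
open Set

section

variable {X : Type*} [TopologicalSpace X]

theorem exists_ne_zero_re_im_separating [CompactSpace X] [NormalSpace X]
    (hd : Dense {g : C(X, ℂ) | ∀ x, g x ≠ 0}) {A₁ B₁ A₂ B₂ : Set X}
    (hA₁ : IsClosed A₁) (hB₁ : IsClosed B₁) (hA₂ : IsClosed A₂) (hB₂ : IsClosed B₂)
    (h₁ : Disjoint A₁ B₁) (h₂ : Disjoint A₂ B₂) :
    ∃ g : C(X, ℂ), (∀ x, g x ≠ 0) ∧ (∀ x ∈ A₁, (g x).re < 0) ∧ (∀ x ∈ B₁, 0 < (g x).re) ∧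
      (∀ x ∈ A₂, (g x).im < 0) ∧ (∀ x ∈ B₂, 0 < (g x).im) := by
  obtain ⟨u₁, hu₁A, hu₁B, -⟩ := exists_continuous_zero_one_of_isClosed hA₁ hB₁ h₁
  obtain ⟨u₂, hu₂A, hu₂B, -⟩ := exists_continuous_zero_one_of_isClosed hA₂ hB₂ h₂
  let F : C(X, ℂ) := ⟨fun x => (u₁ x - 1 / 2 : ℝ) + (u₂ x - 1 / 2 : ℝ) * Complex.I, by fun_prop⟩
  obtain ⟨g, hg, hFg⟩ := hd.exists_dist_lt F (by norm_num : (0 : ℝ) < 1 / 2)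
  have hclose (x : X) : |u₁ x - 1 / 2 - (g x).re| < 1 / 2 ∧ |u₂ x - 1 / 2 - (g x).im| < 1 / 2 := by
    have : ‖F x - g x‖ < 1 / 2 := by
      rw [← dist_eq_norm]; exact (ContinuousMap.dist_apply_le_dist x).trans_lt hFg
    simpa [F] using
      And.intro ((Complex.abs_re_le_norm _).trans_lt this) ((Complex.abs_im_le_norm _).trans_lt this)
  refine ⟨g, hg, fun x hx => ?_, fun x hx => ?_, fun x hx => ?_, fun x hx => ?_⟩
  · have := abs_lt.1 (hclose x).1; simp only [hu₁A hx, Pi.zero_apply] at this; linarith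
  · have := abs_lt.1 (hclose x).1; simp only [hu₁B hx, Pi.one_apply] at this; linarith
  · have := abs_lt.1 (hclose x).2; simp only [hu₂A hx, Pi.zero_apply] at this; linarith
  · have := abs_lt.1 (hclose x).2; simp only [hu₂B hx, Pi.one_apply] at this; linarith

theorem exists_shrink_inter_inter_eq_empty {ι : Type*} [DecidableEq ι] {U : ι → Set X}
    (hUo : ∀ i, IsOpen (U i)) {a b c : ι} (hab : a ≠ b) (hac : a ≠ c) (hbc : b ≠ c)
    {g : X → ℂ} (hg : Continuous g) (hg0 : ∀ x, g x ≠ 0)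
    (ha : {x | (g x).re < 0} ⊆ U a) (hb : {x | (g x).im < 0} ⊆ U b)
    (hcov : ∀ x, 0 ≤ (g x).re → 0 ≤ (g x).im → ∃ j, j ≠ a ∧ j ≠ b ∧ x ∈ U j) :
    ∃ V : ι → Set X, (∀ i, IsOpen (V i)) ∧ ⋃ i, V i = univ ∧ (∀ i, V i ⊆ U i) ∧
      V a ∩ V b ∩ V c = ∅ := by
  have hre : Continuous fun x => (g x).re := by fun_prop
  have him : Continuous fun x => (g x).im := by fun_prop
  let V : ι → Set X := fun i =>
    if i = a then {x | (g x).re < 0}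
    else if i = b then {x | (g x).im < 0}
    else U i ∩ {x | 0 < (g x).re ∨ 0 < (g x).im}
  refine ⟨V, fun i => ?_, eq_univ_of_forall fun x => ?_, fun i => ?_, ?_⟩
  · simp only [V]
    split_ifs
    · exact isOpen_lt hre continuous_const
    · exact isOpen_lt him continuous_const
    · exact (hUo i).inter ((isOpen_lt continuous_const hre).union (isOpen_lt continuous_const him))
  · by_cases hxa : (g x).re < 0
    · exact mem_iUnion.2 ⟨a, by simpa [V] using hxa⟩
    by_cases hxb : (g x).im < 0
    · exact mem_iUnion.2 ⟨b, by simpa [V, hab.symm] using hxb⟩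
    rw [not_lt] at hxa hxb
    obtain ⟨j, hja, hjb, hj⟩ := hcov x hxa hxb
    have hpos : 0 < (g x).re ∨ 0 < (g x).im := by
      by_contra! h
      exact hg0 x (Complex.ext (le_antisymm h.1 hxa) (le_antisymm h.2 hxb))
    refine mem_iUnion.2 ⟨j, ?_⟩
    simp only [V, if_neg hja, if_neg hjb]
    exact ⟨hj, hpos⟩
  · simp only [V]
    split_ifs with hia hib
    exacts [hia ▸ ha, hib ▸ hb, inter_subset_left]
  · refine eq_empty_of_forall_notMem fun x ⟨⟨hxa, hxb⟩, hxc⟩ => ?_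
    simp only [V, if_pos rfl, if_neg hab.symm, if_neg hac.symm, if_neg hbc.symm] at hxa hxb hxc
    rcases hxc.2 with h | h
    · exact lt_asymm h hxa
    · exact lt_asymm h hxb

theorem exists_shrink_biInter_eq_empty_of_card_eq_three [CompactSpace X] [NormalSpace X]
    (hd : Dense {g : C(X, ℂ) | ∀ x, g x ≠ 0}) {ι : Type*} {U : ι → Set X}
    (hUo : ∀ i, IsOpen (U i)) (hUf : ∀ x, {i | x ∈ U i}.Finite) (hU : ⋃ i, U i = univ)
    {t : Finset ι} (ht : t.card = 3) :
    ∃ V : ι → Set X, (∀ i, IsOpen (V i)) ∧ ⋃ i, V i = univ ∧ (∀ i, V i ⊆ U i) ∧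
      ⋂ i ∈ t, V i = ∅ := by
  classical
  obtain ⟨a, b, c, hab, hac, hbc, rfl⟩ := Finset.card_eq_three.1 ht
  obtain ⟨W, hW, -, hWU⟩ := exists_iUnion_eq_closure_subset hUo hUf hU
  obtain ⟨g, hg0, hgWa, hgUa, hgWb, hgUb⟩ := exists_ne_zero_re_im_separating hd
    isClosed_closure (hUo a).isClosed_compl isClosed_closure (hUo b).isClosed_compl
    (disjoint_compl_right_iff_subset.2 (hWU a)) (disjoint_compl_right_iff_subset.2 (hWU b))
  have hcov (x : X) (hxa : 0 ≤ (g x).re) (hxb : 0 ≤ (g x).im) : ∃ j, j ≠ a ∧ j ≠ b ∧ x ∈ U j := by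
    obtain ⟨j, hj⟩ := mem_iUnion.1 (eq_univ_iff_forall.1 hW x)
    refine ⟨j, ?_, ?_, hWU j (subset_closure hj)⟩
    · rintro rfl; exact (hgWa x (subset_closure hj)).not_ge hxa
    · rintro rfl; exact (hgWb x (subset_closure hj)).not_ge hxb
  obtain ⟨V, hVo, hV, hVU, hVe⟩ := exists_shrink_inter_inter_eq_empty hUo hab hac hbc g.continuous
    hg0 (fun x hx => not_not.1 fun hxU => (hgUa x hxU).not_gt hx)
    (fun x hx => not_not.1 fun hxU => (hgUb x hxU).not_gt hx) hcov
  refine ⟨V, hVo, hV, hVU, ?_⟩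
  simpa [inter_assoc] using hVe

theorem exists_shrink_biInter_eq_empty [CompactSpace X] [NormalSpace X]
    (hd : Dense {g : C(X, ℂ) | ∀ x, g x ≠ 0}) {ι : Type*} {U : ι → Set X}
    (hUo : ∀ i, IsOpen (U i)) (hUf : ∀ x, {i | x ∈ U i}.Finite) (hU : ⋃ i, U i = univ)
    (T : Finset (Finset ι)) (hT : ∀ t ∈ T, t.card = 3) :
    ∃ V : ι → Set X, (∀ i, IsOpen (V i)) ∧ ⋃ i, V i = univ ∧ (∀ i, V i ⊆ U i) ∧
      ∀ t ∈ T, ⋂ i ∈ t, V i = ∅ := by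
  classical
  induction T using Finset.induction_on with
  | empty => exact ⟨U, hUo, hU, fun _ => subset_rfl, by simp⟩
  | insert t T _ ih =>
    obtain ⟨V, hVo, hV, hVU, hVT⟩ := ih fun s hs => hT s (Finset.mem_insert_of_mem hs)
    have hVf (x : X) : {i | x ∈ V i}.Finite := (hUf x).subset fun i hi => hVU i hi
    obtain ⟨V', hV'o, hV', hV'V, hV't⟩ := exists_shrink_biInter_eq_empty_of_card_eq_three hd
      hVo hVf hV (hT t (Finset.mem_insert_self t T))
    refine ⟨V', hV'o, hV', fun i => (hV'V i).trans (hVU i), fun s hs => ?_⟩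
    rcases Finset.mem_insert.1 hs with rfl | hs
    · exact hV't
    · exact subset_empty_iff.1 <| (hVT s hs) ▸ iInter₂_mono fun i _ => hV'V i

theorem exists_shrink_eq_empty_off_finset [CompactSpace X] {ι : Type*} {U : ι → Set X}
    (hUo : ∀ i, IsOpen (U i)) (hU : ⋃ i, U i = univ) :
    ∃ (s : Finset ι) (V : ι → Set X), (∀ i, IsOpen (V i)) ∧ ⋃ i, V i = univ ∧
      (∀ i, V i ⊆ U i) ∧ ∀ i ∉ s, V i = ∅ := by
  classical
  obtain ⟨s, hs⟩ := isCompact_univ.elim_finite_subcover U hUo hU.ge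
  refine ⟨s, fun i => if i ∈ s then U i else ∅, fun i => ?_, ?_, fun i => ?_,
    fun i hi => if_neg hi⟩
  · dsimp only
    split_ifs
    exacts [hUo i, isOpen_empty]
  · refine eq_univ_of_forall fun x => ?_
    obtain ⟨i, his, hi⟩ := mem_iUnion₂.1 (hs (mem_univ x))
    exact mem_iUnion.2 ⟨i, by simpa [his] using hi⟩
  · dsimp only
    split_ifs
    exacts [subset_rfl, empty_subset _]

theorem ncard_le_of_biInter_eq_empty {α ι : Type*} {V : ι → Set α} {s : Finset ι} {x : α}
    {n : ℕ} (hxs : {i | x ∈ V i} ⊆ s) (hV : ∀ t ∈ s.powersetCard (n + 1), ⋂ i ∈ t, V i = ∅) :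
    {i | x ∈ V i}.ncard ≤ n := by
  classical
  have hx : {i | x ∈ V i} = ↑(s.filter fun i => x ∈ V i) := by
    ext i
    simpa using fun hi => hxs hi
  rw [hx, ncard_coe_finset]
  by_contra! h
  obtain ⟨t, hts, ht⟩ := Finset.exists_subset_card_eq h
  have hxt : x ∈ ⋂ i ∈ t, V i := mem_iInter₂.2 fun i hi => (Finset.mem_filter.1 (hts hi)).2
  rw [hV t (Finset.mem_powersetCard.2 ⟨hts.trans (Finset.filter_subset _ _), ht⟩)] at hxt
  exact hxt

theorem coveringDimLE_one_of_dense [CompactSpace X] [NormalSpace X]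
    (hd : Dense {g : C(X, ℂ) | ∀ x, g x ≠ 0}) : CoveringDimLE X 1 := by
  intro ι U hUo hU
  obtain ⟨s, U', hU'o, hU', hU'U, hU's⟩ := exists_shrink_eq_empty_off_finset hUo hU
  have hsupp {V : ι → Set X} (hVU' : ∀ i, V i ⊆ U' i) (x : X) : {i | x ∈ V i} ⊆ s :=
    fun i hi => by_contra fun his => by simpa [hU's i his] using hVU' i hi
  obtain ⟨V, hVo, hV, hVU', hVs⟩ := exists_shrink_biInter_eq_empty hd hU'o
    (fun x => s.finite_toSet.subset (hsupp (fun _ => subset_rfl) x)) hU' (s.powersetCard 3)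
    (fun t ht => (Finset.mem_powersetCard.1 ht).2)
  exact ⟨V, hVo, hV, fun i => (hVU' i).trans (hU'U i), fun x =>
    ⟨s.finite_toSet.subset (hsupp hVU' x), ncard_le_of_biInter_eq_empty (hsupp hVU' x) hVs⟩⟩

end

/-- On a compact Hausdorff space of covering dimension ≥ 2 there is a continuous
complex-valued function that cannot be uniformly approximated by nowhere-vanishing
continuous functions. -/
theorem stmt_3 (E : Type*) [TopologicalSpace E] [CompactSpace E] [T2Space E]
    (hdim : ¬ CoveringDimLE E 1) :
    ∃ f : C(E, ℂ), ∃ ε > (0 : ℝ), ∀ g : C(E, ℂ), (∀ x, g x ≠ 0) → ε ≤ ‖f - g‖ := by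
  contrapose! hdim
  refine coveringDimLE_one_of_dense (Metric.dense_iff.2 fun f ε hε => ?_)
  obtain ⟨g, hg, hfg⟩ := hdim f ε hε
  exact ⟨g, by rwa [Metric.mem_ball, dist_comm, dist_eq_norm], hg⟩
end

section
/- Let X be a compact Hausdorff space, F a set of continuous nowhere-vanishing functions on X, and define X₁ = {(x, y) ∈ X × ℂ^F : y(f)² = f(x) for all f ∈ F} with the product topology. Then X₁ is a compact Hausdorff space and the projection p : X₁ → X, p(x, y) = x, is a continuous surjection. -/
/-! Since `|y(f)|² = |f(x)| ≤ ‖f‖`, `X₁` is a closed subset of `X × ∏_f D(0, √‖f‖)`, which is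
compact by Tychonoff; the projection is onto because every complex number has a square root. -/

/-- The first stage of Cole's square-root extension construction: the subset of
`X × ℂ^F` consisting of pairs `(x, y)` with `y(f)² = f(x)` for all `f ∈ F`. -/
def ColeExt (X : Type*) [TopologicalSpace X] (F : Set C(X, ℂ)) : Set (X × (F → ℂ)) :=
  {z | ∀ f : F, z.2 f ^ 2 = (f : C(X, ℂ)) z.1}

theorem isClosed_coleExt (X : Type*) [TopologicalSpace X] (F : Set C(X, ℂ)) :
    IsClosed (ColeExt X F) := by
  simp only [ColeExt, Set.ofPred_forall]
  exact isClosed_iInter fun f =>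
    isClosed_eq (((continuous_apply f).comp continuous_snd).pow 2)
      ((f : C(X, ℂ)).continuous.comp continuous_fst)

theorem coleExt_subset_prod_pi_closedBall (X : Type*) [TopologicalSpace X] [CompactSpace X]
    (F : Set C(X, ℂ)) :
    ColeExt X F ⊆ Set.univ ×ˢ
      Set.univ.pi fun f : F => Metric.closedBall (0 : ℂ) (Real.sqrt ‖(f : C(X, ℂ))‖) := by
  rintro ⟨x, y⟩ hz
  refine ⟨Set.mem_univ x, fun f _ => ?_⟩
  rw [mem_closedBall_zero_iff, Real.le_sqrt (norm_nonneg _) (norm_nonneg _), ← norm_pow, hz f]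
  exact (f : C(X, ℂ)).norm_coe_le_norm x

theorem isCompact_coleExt (X : Type*) [TopologicalSpace X] [CompactSpace X]
    (F : Set C(X, ℂ)) : IsCompact (ColeExt X F) :=
  (isCompact_univ.prod (isCompact_univ_pi fun _ => isCompact_closedBall 0 _)).of_isClosed_subset
    (isClosed_coleExt X F) (coleExt_subset_prod_pi_closedBall X F)

theorem coleExt_fst_surjective (X : Type*) [TopologicalSpace X] (F : Set C(X, ℂ)) :
    Function.Surjective (fun z : ColeExt X F => (z : X × (F → ℂ)).1) := by
  intro x
  choose y hy using fun f : F =>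
    IsAlgClosed.exists_pow_nat_eq ((f : C(X, ℂ)) x) two_pos
  exact ⟨⟨(x, y), hy⟩, rfl⟩

theorem stmt_7_general (X : Type*) [TopologicalSpace X] [CompactSpace X] [T2Space X]
    (F : Set C(X, ℂ)) :
    IsCompact (ColeExt X F) ∧ T2Space ↥(ColeExt X F) ∧
      Continuous (fun z : ↥(ColeExt X F) => (z : X × (F → ℂ)).1) ∧
      Function.Surjective (fun z : ↥(ColeExt X F) => (z : X × (F → ℂ)).1) :=
  ⟨isCompact_coleExt X F, inferInstance, continuous_fst.comp continuous_subtype_val,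
    coleExt_fst_surjective X F⟩

/-- The Cole extension `X₁` of a compact Hausdorff space `X` by square roots of a family
`F` of nowhere-vanishing functions is compact Hausdorff, and the natural projection
`X₁ → X` is a continuous surjection. -/
theorem stmt_7 (X : Type*) [TopologicalSpace X] [CompactSpace X] [T2Space X]
    (F : Set C(X, ℂ)) (hF : ∀ f ∈ F, ∀ x, f x ≠ 0) :
    IsCompact (ColeExt X F) ∧ T2Space ↥(ColeExt X F) ∧
      Continuous (fun z : ↥(ColeExt X F) => (z : X × (F → ℂ)).1) ∧
      Function.Surjective (fun z : ↥(ColeExt X F) => (z : X × (F → ℂ)).1) :=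
  stmt_7_general X F
end

section
/- Let A be a commutative unital Banach algebra over ℂ with dense invertibles, E a closed subset of the maximal ideal space 𝔐_A, and B the sup-norm closure in C(E, ℂ) of the restrictions to E of the Gelfand transforms of elements of A. Then B has dense invertibles. -/
/-! Restriction to `E` composed with the Gelfand transform is a continuous ring homomorphism
`T : A → C(E, ℂ)`, so `T` maps the dense set of units of `A` onto a dense subset of
`B = closure (range T)`, and each `T u` is invertible in `B` with inverse `T u⁻¹`. -/

open Set

theorem closure_range_subset_closure_units_of_dense_isUnit {R S F : Type*} [Monoid R] [Monoid S]
    [TopologicalSpace R] [TopologicalSpace S] [FunLike F R S] [MonoidHomClass F R S]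
    (T : F) (hT : Continuous T) (hd : Dense {a : R | IsUnit a}) :
    closure (range T) ⊆
      closure {g | g ∈ closure (range T) ∧ ∃ h ∈ closure (range T), g * h = 1} := by
  have hunits : T '' {a | IsUnit a} ⊆
      {g | g ∈ closure (range T) ∧ ∃ h ∈ closure (range T), g * h = 1} := by
    rintro _ ⟨_, ⟨u, rfl⟩, rfl⟩
    exact ⟨subset_closure ⟨u, rfl⟩, T ↑u⁻¹, subset_closure ⟨_, rfl⟩, by
      rw [← map_mul, Units.mul_inv, map_one]⟩
  calc closure (range T) ⊆ closure (closure (T '' {a | IsUnit a})) :=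
        closure_mono (hT.range_subset_closure_image_dense hd)
    _ = closure (T '' {a | IsUnit a}) := closure_closure
    _ ⊆ _ := closure_mono hunits

namespace WeakDual

theorem norm_gelfandTransform_apply_le {𝕜 A : Type*} [NontriviallyNormedField 𝕜] [ProperSpace 𝕜]
    [NormedRing A] [NormedAlgebra 𝕜 A] [CompleteSpace A] (a : A) :
    ‖gelfandTransform 𝕜 A a‖ ≤ ‖(1 : A)‖ * ‖a‖ :=
  (ContinuousMap.norm_le _ (by positivity)).mpr fun φ =>
    (toStrongDual (φ : WeakDual 𝕜 A)).le_of_opNorm_le (CharacterSpace.norm_le_norm_one φ) a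

theorem continuous_gelfandTransform {𝕜 A : Type*} [NontriviallyNormedField 𝕜] [ProperSpace 𝕜]
    [NormedRing A] [NormedAlgebra 𝕜 A] [CompleteSpace A] :
    Continuous (gelfandTransform 𝕜 A) :=
  AddMonoidHomClass.continuous_of_bound _ _ norm_gelfandTransform_apply_le

end WeakDual

theorem stmt_12_general (A : Type*) [NormedCommRing A] [NormedAlgebra ℂ A] [CompleteSpace A]
    (hd : Dense {a : A | IsUnit a})
    (E : Set (WeakDual.characterSpace ℂ A))
    (B : Set C(↥E, ℂ))
    (hB : B = closure {f : C(↥E, ℂ) |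
      ∃ a : A, f = ContinuousMap.restrict E (WeakDual.gelfandTransform ℂ A a)}) :
    B ⊆ closure {g : C(↥E, ℂ) | g ∈ B ∧ ∃ h ∈ B, g * h = 1} := by
  let T := (ContinuousMap.compRightAlgHom ℂ ℂ ⟨((↑) : E → _), continuous_subtype_val⟩).comp
    (WeakDual.gelfandTransform ℂ A)
  have hT : Continuous T :=
    (ContinuousMap.continuous_restrict E).comp WeakDual.continuous_gelfandTransform
  have hB' : B = closure (range T) := by
    rw [hB]
    congr 1
    ext f
    exact exists_congr fun a => eq_comm
  rw [hB']
  exact closure_range_subset_closure_units_of_dense_isUnit T hT hd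

/-- If `A` is a commutative unital Banach algebra with dense invertibles and `E` is a
closed subset of the maximal ideal space, then the uniform closure `B` on `E` of the
restricted Gelfand transforms has dense invertibles (invertibility taken in `B`). -/
theorem stmt_12 (A : Type*) [NormedCommRing A] [NormedAlgebra ℂ A] [CompleteSpace A]
    (hd : Dense {a : A | IsUnit a})
    (E : Set (WeakDual.characterSpace ℂ A)) (hE : IsClosed E)
    (B : Set C(↥E, ℂ))
    (hB : B = closure {f : C(↥E, ℂ) |
      ∃ a : A, f = ContinuousMap.restrict E (WeakDual.gelfandTransform ℂ A a)}) :
    B ⊆ closure {g : C(↥E, ℂ) | g ∈ B ∧ ∃ h ∈ B, g * h = 1} :=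
  stmt_12_general A hd E B hB
end

section
/- Let E be a compact Hausdorff space with covering dimension ≤ 1. Then every continuous map f : E → ℂ can be uniformly approximated by continuous maps E → ℂ∖{0}; i.e., nowhere-vanishing functions are dense in C(E, ℂ). -/
open Set Metric MeasureTheory Module

theorem MeasureTheory.Measure.addHaar_segment {F : Type*} [NormedAddCommGroup F]
    [NormedSpace ℝ F] [MeasurableSpace F] [BorelSpace F] [FiniteDimensional ℝ F]
    (μ : Measure F) [μ.IsAddHaarMeasure] (hF : 1 < finrank ℝ F) (a b : F) :
    μ (segment ℝ a b) = 0 := by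
  refine measure_mono_null ?_ (Measure.addHaar_affineSubspace μ line[ℝ, a, b] fun htop => ?_)
  · rw [← convexHull_pair]
    exact convexHull_subset_affineSpan _
  · have hcol := (collinear_pair ℝ a b).finrank_le_one
    rw [← direction_affineSpan, htop, AffineSubspace.direction_top, finrank_top] at hcol
    omega

theorem dense_compl_iUnion_segment {ι F : Type*} [Countable ι] [NormedAddCommGroup F]
    [NormedSpace ℝ F] [FiniteDimensional ℝ F] (hF : 1 < finrank ℝ F) (c : ι → F) :
    Dense (⋃ i, ⋃ j, segment ℝ (c i) (c j))ᶜ := by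
  borelize F
  refine (Measure.addHaar (G := F)).dense_of_ae ?_
  rw [← measure_eq_zero_iff_ae_notMem]
  exact measure_iUnion_null fun i => measure_iUnion_null fun j =>
    Measure.addHaar_segment _ hF _ _

theorem convexHull_image_subset_iUnion_segment {ι F : Type*} [AddCommGroup F] [Module ℝ F]
    (c : ι → F) {s : Set ι} (hs : s.Finite) (hcard : s.ncard ≤ 2) :
    convexHull ℝ (c '' s) ⊆ ⋃ i, ⋃ j, segment ℝ (c i) (c j) := by
  interval_cases h : s.ncard
  · rw [(ncard_eq_zero hs).1 h]
    simp
  · obtain ⟨a, rfl⟩ := ncard_eq_one.1 h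
    rw [image_singleton, convexHull_singleton, singleton_subset_iff]
    exact mem_iUnion₂.2 ⟨a, a, left_mem_segment ℝ _ _⟩
  · obtain ⟨a, b, -, rfl⟩ := ncard_eq_two.1 h
    rw [image_pair, convexHull_pair]
    exact subset_iUnion₂ (s := fun i j => segment ℝ (c i) (c j)) a b

theorem CoveringDimLE.exists_partitionOfUnity {X : Type*} [TopologicalSpace X] [NormalSpace X]
    [ParacompactSpace X] {n : ℕ} (hdim : CoveringDimLE X n) {ι : Type} (U : ι → Set X)
    (hUo : ∀ i, IsOpen (U i)) (hU : ⋃ i, U i = univ) :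
    ∃ ρ : PartitionOfUnity ι X univ, ρ.IsSubordinate U ∧
      ∀ x, {i | ρ i x ≠ 0}.Finite ∧ {i | ρ i x ≠ 0}.ncard ≤ n + 1 := by
  obtain ⟨V, hVo, hV, hVU, hVord⟩ := hdim ι U hUo hU
  obtain ⟨ρ, hρ⟩ := PartitionOfUnity.exists_isSubordinate isClosed_univ V hVo hV.ge
  have hsupp : ∀ x, {i | ρ i x ≠ 0} ⊆ {i | x ∈ V i} := fun x i hi => hρ i (subset_tsupport _ hi)
  refine ⟨ρ, fun i => (hρ i).trans (hVU i), fun x => ⟨(hVord x).1.subset (hsupp x), ?_⟩⟩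
  exact (ncard_le_ncard (hsupp x) (hVord x).1).trans (hVord x).2

namespace PartitionOfUnity

variable {ι X F : Type*} [TopologicalSpace X]

theorem dist_finsum_smul_le [SeminormedAddCommGroup F] [NormedSpace ℝ F]
    (ρ : PartitionOfUnity ι X univ) {f : X → F} {c : ι → F} {δ : ℝ}
    (hρ : ρ.IsSubordinate fun i => f ⁻¹' ball (c i) δ) (x : X) :
    dist (∑ᶠ i, ρ i x • c i) (f x) ≤ δ := by
  refine ρ.finsum_smul_mem_convex (g := fun j _ => c j) (mem_univ x) (fun i hi => ?_)
    (convex_closedBall (f x) δ)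
  rw [mem_closedBall, dist_comm]
  exact (hρ i (subset_tsupport _ hi)).le

theorem finsum_smul_mem_iUnion_segment [AddCommGroup F] [Module ℝ F]
    (ρ : PartitionOfUnity ι X univ) (c : ι → F) {x : X} (hfin : {i | ρ i x ≠ 0}.Finite)
    (hcard : {i | ρ i x ≠ 0}.ncard ≤ 2) :
    ∑ᶠ i, ρ i x • c i ∈ ⋃ i, ⋃ j, segment ℝ (c i) (c j) :=
  convexHull_image_subset_iUnion_segment c hfin hcard <|
    ρ.finsum_smul_mem_convex (g := fun j _ => c j) (mem_univ x)
      (fun _ hi => subset_convexHull ℝ _ (mem_image_of_mem c hi)) (convex_convexHull ℝ _)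

end PartitionOfUnity

/-- On a compact Hausdorff space of covering dimension at most 1, the nowhere-vanishing
continuous functions are dense in `C(E, ℂ)`. -/
theorem stmt_19 (E : Type*) [TopologicalSpace E] [CompactSpace E] [T2Space E]
    (hdim : CoveringDimLE E 1) : Dense {f : C(E, ℂ) | ∀ x, f x ≠ 0} := by
  rw [Metric.dense_iff]
  intro f ε hε
  have hε2 : 0 < ε / 2 := half_pos hε
  obtain ⟨s, hs⟩ := isCompact_univ.elim_finite_subcover (fun c : ℂ => f ⁻¹' ball c (ε / 2))
    (fun c => isOpen_ball.preimage f.continuous) fun x _ => mem_iUnion.2 ⟨f x, mem_ball_self hε2⟩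
  obtain ⟨ρ, hρU, hρord⟩ := hdim.exists_partitionOfUnity (fun c : s => f ⁻¹' ball (c : ℂ) (ε / 2))
    (fun c => isOpen_ball.preimage f.continuous) (by
      refine eq_univ_of_univ_subset (hs.trans fun x hx => ?_)
      obtain ⟨c, hc, hxc⟩ := mem_iUnion₂.1 hx
      exact mem_iUnion.2 ⟨⟨c, hc⟩, hxc⟩)
  let g : C(E, ℂ) := ⟨fun x => ∑ᶠ c : s, ρ c x • (c : ℂ),
    ρ.continuous_finsum_smul fun _ _ _ => continuousAt_const⟩
  obtain ⟨t, ht, htB⟩ := Metric.dense_iff.1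
    (dense_compl_iUnion_segment (by simp) fun c : s => (c : ℂ)) 0 (ε / 2) hε2
  refine ⟨g - ContinuousMap.const E t, ?_, fun x hx => htB ?_⟩
  · rw [mem_ball, ContinuousMap.dist_lt_iff hε]
    intro x
    calc dist (g x - t) (f x) ≤ dist (g x - t) (g x) + dist (g x) (f x) := dist_triangle _ _ _
      _ < ε / 2 + ε / 2 := by
        rw [dist_self_sub_left]
        exact add_lt_add_of_lt_of_le (mem_ball_zero_iff.1 ht) (ρ.dist_finsum_smul_le hρU x)
      _ = ε := add_halves ε
  · rw [ContinuousMap.sub_apply, ContinuousMap.const_apply, sub_eq_zero] at hx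
    rw [← hx]
    exact ρ.finsum_smul_mem_iUnion_segment _ (hρord x).1 (hρord x).2
end
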